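/- There exists an absolute constant c > 0 such that the following holds. Let H be a real Hilbert space, n ≥ 2 an integer, 0 < δ ≤ 1, and let P_1, …, P_n be orthogonal projections on H. If for every permutation σ of {1, …, n} one has ‖P_{σ(n)} P_{σ(n−1)} ⋯ P_{σ(1)}‖ ≤ 1 − δ, then ‖(1/n) Σ_{i=1}^n P_i‖ ≤ 1 − c (δ / (n log(n/δ)))². -/

import Mathlib

open scoped RealInnerProductSpace

universe u

/-- A bounded operator on a real Hilbert space is an orthogonal projection if it is
self-adjoint and idempotent. -/
def IsOrthProj {H : Type u} [NormedAddCommGroup H] [InnerProductSpace ℝ H]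
    (P : H →L[ℝ] H) : Prop :=
  (∀ x y : H, ⟪P x, y⟫ = ⟪x, P y⟫) ∧ ∀ x : H, P (P x) = P x

/-!
For a unit vector `x`, the scan `P_n ⋯ P_1` has norm at most `1 - δ`, so it moves `x` by at
least `δ`; telescoping bounds this displacement by `∑ ‖x - P_j x‖`, and Cauchy–Schwarz gives
`∑ ‖x - P_j x‖² ≥ δ² / n`. By Pythagoras each `‖P_j x‖ ≤ 1 - ‖x - P_j x‖² / 2`, hence
`‖(1/n) ∑ P_j‖ ≤ 1 - δ² / (2n²)`. As `log (n/δ) ≥ log 2`, this is the claim with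
`c = (log 2)² / 2`.
-/

namespace IsOrthProj

variable {H : Type*} [NormedAddCommGroup H] [InnerProductSpace ℝ H] {P : H →L[ℝ] H}

theorem norm_apply_sq (hP : IsOrthProj P) (x : H) : ‖P x‖ ^ 2 = ⟪x, P x⟫ := by
  rw [← real_inner_self_eq_norm_sq, hP.1, hP.2]

theorem norm_le_one (hP : IsOrthProj P) : ‖P‖ ≤ 1 :=
  P.opNorm_le_bound zero_le_one fun x => by
    nlinarith [hP.norm_apply_sq x, real_inner_le_norm x (P x), norm_nonneg (P x), norm_nonneg x]

theorem norm_apply_sq_add_norm_sub_sq (hP : IsOrthProj P) (x : H) :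
    ‖P x‖ ^ 2 + ‖x - P x‖ ^ 2 = ‖x‖ ^ 2 := by
  rw [norm_sub_sq_real, ← hP.norm_apply_sq]
  ring

theorem norm_apply_le_one_sub (hP : IsOrthProj P) {x : H} (hx : ‖x‖ = 1) :
    ‖P x‖ ≤ 1 - ‖x - P x‖ ^ 2 / 2 := by
  have hpyth := hP.norm_apply_sq_add_norm_sub_sq x
  rw [hx] at hpyth
  nlinarith [norm_nonneg (P x), sq_nonneg (‖x - P x‖ ^ 2), sq_nonneg (‖P x‖ - 1)]

end IsOrthProj

section Contractions

variable {𝕜 E : Type*} [NontriviallyNormedField 𝕜] [SeminormedAddCommGroup E]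
  [NormedSpace 𝕜 E]

theorem norm_sub_list_prod_apply_le (L : List (E →L[𝕜] E)) (hL : ∀ T ∈ L, ‖T‖ ≤ 1) (x : E) :
    ‖x - L.prod x‖ ≤ (L.map fun T => ‖x - T x‖).sum := by
  induction L with
  | nil => simp
  | cons T L ih =>
    have hT : ‖T (x - L.prod x)‖ ≤ ‖x - L.prod x‖ := by
      simpa using T.le_of_opNorm_le (hL T List.mem_cons_self) (x - L.prod x)
    have hsplit : x - (T :: L).prod x = (x - T x) + T (x - L.prod x) := by
      rw [List.prod_cons, mul_apply_eq_comp, map_sub]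
      abel
    calc ‖x - (T :: L).prod x‖ ≤ ‖x - T x‖ + ‖x - L.prod x‖ :=
          hsplit ▸ (norm_add_le _ _).trans (by gcongr)
      _ ≤ ‖x - T x‖ + (L.map fun T => ‖x - T x‖).sum := by
          gcongr
          exact ih fun S hS => hL S (List.mem_cons_of_mem _ hS)
      _ = ((T :: L).map fun T => ‖x - T x‖).sum := by simp

theorem le_sum_norm_sub_of_norm_scan_le {n : ℕ} {P : Fin n → E →L[𝕜] E}
    (hP : ∀ j, ‖P j‖ ≤ 1) {δ : ℝ} (hscan : ‖(List.ofFn P).reverse.prod‖ ≤ 1 - δ) {x : E}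
    (hx : ‖x‖ = 1) : δ ≤ ∑ j, ‖x - P j x‖ := by
  set Q := (List.ofFn P).reverse.prod
  have hQx : ‖Q x‖ ≤ 1 - δ := by simpa [hx] using Q.le_of_opNorm_le hscan x
  have hdisp : ‖x - Q x‖ ≤ ∑ j, ‖x - P j x‖ := by
    have h := norm_sub_list_prod_apply_le (List.ofFn P).reverse
      (by simpa [List.mem_ofFn] using hP) x
    rwa [List.map_reverse, List.sum_reverse, List.map_ofFn, List.sum_ofFn] at h
  linarith [norm_sub_norm_le x (Q x)]

end Contractions

theorem norm_average_le_of_norm_scan_le {H : Type*} [NormedAddCommGroup H]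
    [InnerProductSpace ℝ H] {n : ℕ} (hn : 0 < n) {P : Fin n → H →L[ℝ] H}
    (hP : ∀ j, IsOrthProj (P j)) {δ : ℝ} (hδ0 : 0 ≤ δ) (hδ1 : δ ≤ 1)
    (hscan : ‖(List.ofFn P).reverse.prod‖ ≤ 1 - δ) :
    ‖(n : ℝ)⁻¹ • ∑ j, P j‖ ≤ 1 - δ ^ 2 / (2 * n ^ 2) := by
  have hn1 : (1 : ℝ) ≤ n := by exact_mod_cast hn
  have hbound_nonneg : 0 ≤ 1 - δ ^ 2 / (2 * n ^ 2) := by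
    rw [sub_nonneg, div_le_one (by positivity)]
    nlinarith
  refine ContinuousLinearMap.opNorm_le_of_unit_norm hbound_nonneg fun x hx => ?_
  set S := ∑ j, ‖x - P j x‖ ^ 2
  have hCS : δ ^ 2 ≤ n * S := by
    have hδ := le_sum_norm_sub_of_norm_scan_le (fun j => (hP j).norm_le_one) hscan hx
    calc δ ^ 2 ≤ (∑ j, ‖x - P j x‖) ^ 2 := by gcongr
      _ ≤ n * S := by
          simpa using sq_sum_le_card_mul_sum_sq (s := Finset.univ) (f := fun j => ‖x - P j x‖)
  have hsum : ‖∑ j, P j x‖ ≤ n - S / 2 :=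
    calc ‖∑ j, P j x‖ ≤ ∑ j, ‖P j x‖ := norm_sum_le _ _
      _ ≤ ∑ j, (1 - ‖x - P j x‖ ^ 2 / 2) :=
          Finset.sum_le_sum fun j _ => (hP j).norm_apply_le_one_sub hx
      _ = n - S / 2 := by simp [S, Finset.sum_sub_distrib, Finset.sum_div]
  rw [smul_apply, sum_apply, norm_smul, norm_inv, Real.norm_natCast]
  calc (n : ℝ)⁻¹ * ‖∑ j, P j x‖ ≤ (n : ℝ)⁻¹ * (n - S / 2) := by gcongr
    _ = 1 - S / (2 * n) := by field_simp
    _ ≤ 1 - δ ^ 2 / (2 * n ^ 2) := by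
        rw [sub_le_sub_iff_left, div_le_div_iff₀ (by positivity) (by positivity)]
        nlinarith

theorem log_two_sq_mul_sq_div_mul_log_le {n δ : ℝ} (hn : 2 ≤ n) (hδ0 : 0 < δ) (hδ1 : δ ≤ 1) :
    Real.log 2 ^ 2 / 2 * (δ / (n * Real.log (n / δ))) ^ 2 ≤ δ ^ 2 / (2 * n ^ 2) := by
  have hlog2 : 0 < Real.log 2 := Real.log_pos one_lt_two
  have hlog : Real.log 2 ≤ Real.log (n / δ) :=
    Real.log_le_log two_pos (by rw [le_div_iff₀ hδ0]; nlinarith)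
  have hlog_pos : 0 < Real.log (n / δ) := hlog2.trans_le hlog
  calc Real.log 2 ^ 2 / 2 * (δ / (n * Real.log (n / δ))) ^ 2
      = δ ^ 2 / (2 * n ^ 2) * (Real.log 2 / Real.log (n / δ)) ^ 2 := by
        field_simp
    _ ≤ δ ^ 2 / (2 * n ^ 2) * 1 := by
        gcongr
        exact pow_le_one₀ (by positivity) ((div_le_one hlog_pos).2 hlog)
    _ = δ ^ 2 / (2 * n ^ 2) := mul_one _

/-- There is an absolute constant `c > 0` such that if all systematic scans of a family
of orthogonal projections `P_1, …, P_n` (`n ≥ 2`) satisfy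
`‖P_{σ(n)} ⋯ P_{σ(1)}‖ ≤ 1 - δ` (`0 < δ ≤ 1`), then
`‖(1/n) ∑ P_i‖ ≤ 1 - c (δ / (n log(n/δ)))²`. -/
theorem glauber_gap_of_all_scan_gaps :
    ∃ c : ℝ, 0 < c ∧
      ∀ (H : Type u) [NormedAddCommGroup H] [InnerProductSpace ℝ H] [CompleteSpace H]
        (n : ℕ), 2 ≤ n →
        ∀ (δ : ℝ), 0 < δ → δ ≤ 1 →
        ∀ (P : Fin n → H →L[ℝ] H), (∀ j, IsOrthProj (P j)) →
        (∀ σ : Equiv.Perm (Fin n),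
          ‖((List.ofFn fun j => P (σ j)).reverse).prod‖ ≤ 1 - δ) →
        ‖(n : ℝ)⁻¹ • ∑ j, P j‖ ≤ 1 - c * (δ / (n * Real.log (n / δ))) ^ 2 := by
  refine ⟨Real.log 2 ^ 2 / 2, by positivity, ?_⟩
  intro H _ _ _ n hn δ hδ0 hδ1 P hP hscan
  have hid : ‖(List.ofFn P).reverse.prod‖ ≤ 1 - δ := by simpa using hscan (Equiv.refl _)
  calc ‖(n : ℝ)⁻¹ • ∑ j, P j‖ ≤ 1 - δ ^ 2 / (2 * n ^ 2) :=
        norm_average_le_of_norm_scan_le (by omega) hP hδ0.le hδ1 hid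
    _ ≤ 1 - Real.log 2 ^ 2 / 2 * (δ / (n * Real.log (n / δ))) ^ 2 := by
        linarith [log_two_sq_mul_sq_div_mul_log_le (n := n) (by exact_mod_cast hn) hδ0 hδ1]
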